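/- If n is odd, then Σ_{π∈D_n(321)} (−1)^{exc π} q^{inv π} = 0 in ℤ[q]. If n = 2m is even, then Σ_{π∈D_{2m}(321)} (−1)^{exc π} q^{inv π} = (−1)^m · Σ_{π∈NDE_{2m,m}(321)} q^{inv π} in ℤ[q]. -/

import Mathlib

open scoped Classical
open Finset

/-- Value of `π` at the 1-indexed position `i`, as a number in `{1,…,n}`;
positions outside `[1,n]` get the boundary value `b`. -/
def pvalB {n : ℕ} (b : ℕ) (π : Equiv.Perm (Fin n)) (i : ℕ) : ℕ :=
  if h : 1 ≤ i ∧ i ≤ n then (π ⟨i - 1, by omega⟩).val + 1 else b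

/-- Value of `π` at the 1-indexed position `i` (boundary value 0). -/
def pval {n : ℕ} (π : Equiv.Perm (Fin n)) : ℕ → ℕ := pvalB 0 π

/-- number of descents -/
def desStat {n : ℕ} (π : Equiv.Perm (Fin n)) : ℕ :=
  ((Finset.Icc 1 (n - 1)).filter fun i => pval π (i + 1) < pval π i).card

/-- number of excedances -/
def excStat {n : ℕ} (π : Equiv.Perm (Fin n)) : ℕ :=
  ((Finset.Icc 1 n).filter fun i => i < pval π i).card

/-- number of weak excedances -/
def wexStat {n : ℕ} (π : Equiv.Perm (Fin n)) : ℕ :=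
  ((Finset.Icc 1 n).filter fun i => i ≤ pval π i).card

/-- number of inversions -/
def invStat {n : ℕ} (π : Equiv.Perm (Fin n)) : ℕ :=
  (((Finset.Icc 1 n) ×ˢ (Finset.Icc 1 n)).filter fun p =>
    p.1 < p.2 ∧ pval π p.2 < pval π p.1).card

/-- number of fixed points -/
def fixStat {n : ℕ} (π : Equiv.Perm (Fin n)) : ℕ :=
  ((Finset.Icc 1 n).filter fun i => pval π i = i).card

/-- number of occurrences of the vincular pattern 31-2:
pairs (i,j) with i+1 < j ≤ n and π(i+1) < π(j) < π(i) -/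
def v31_2 {n : ℕ} (π : Equiv.Perm (Fin n)) : ℕ :=
  (((Finset.Icc 1 n) ×ˢ (Finset.Icc 1 n)).filter fun p =>
    p.1 + 1 < p.2 ∧ pval π (p.1 + 1) < pval π p.2 ∧ pval π p.2 < pval π p.1).card

/-- number of occurrences of the vincular pattern 13-2:
pairs (i,j) with i+1 < j ≤ n and π(i) < π(j) < π(i+1) -/
def v13_2 {n : ℕ} (π : Equiv.Perm (Fin n)) : ℕ :=
  (((Finset.Icc 1 n) ×ˢ (Finset.Icc 1 n)).filter fun p =>
    p.1 + 1 < p.2 ∧ pval π p.1 < pval π p.2 ∧ pval π p.2 < pval π (p.1 + 1)).card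

/-- number of occurrences of the vincular pattern 2-31:
pairs (i,j) with 1 ≤ j < i ≤ n-1 and π(i+1) < π(j) < π(i); here `p = (i, j)` -/
def v2_31 {n : ℕ} (π : Equiv.Perm (Fin n)) : ℕ :=
  (((Finset.Icc 1 (n - 1)) ×ˢ (Finset.Icc 1 (n - 1))).filter fun p =>
    p.2 < p.1 ∧ pval π (p.1 + 1) < pval π p.2 ∧ pval π p.2 < pval π p.1).card

/-- number of occurrences of the vincular pattern 2-13:
pairs (i,j) with 1 ≤ j < i ≤ n-1 and π(i) < π(j) < π(i+1); here `p = (i, j)` -/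
def v2_13 {n : ℕ} (π : Equiv.Perm (Fin n)) : ℕ :=
  (((Finset.Icc 1 (n - 1)) ×ˢ (Finset.Icc 1 (n - 1))).filter fun p =>
    p.2 < p.1 ∧ pval π p.1 < pval π p.2 ∧ pval π p.2 < pval π (p.1 + 1)).card

/-- number of occurrences of the vincular pattern 3-12:
pairs (i,j) with 1 ≤ i < j ≤ n-1 and π(j) < π(j+1) < π(i) -/
def v3_12 {n : ℕ} (π : Equiv.Perm (Fin n)) : ℕ :=
  (((Finset.Icc 1 (n - 1)) ×ˢ (Finset.Icc 1 (n - 1))).filter fun p =>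
    p.1 < p.2 ∧ pval π p.2 < pval π (p.2 + 1) ∧ pval π (p.2 + 1) < pval π p.1).card

/-- number of admissible inversions -/
noncomputable def adiStat {n : ℕ} (π : Equiv.Perm (Fin n)) : ℕ :=
  (((Finset.Icc 1 n) ×ˢ (Finset.Icc 1 n)).filter fun p =>
    p.1 < p.2 ∧ pval π p.2 < pval π p.1 ∧
      ((p.2 < n ∧ pval π p.2 < pval π (p.2 + 1)) ∨
        ∃ l, p.1 < l ∧ l < p.2 ∧ pval π l < pval π p.2)).card

/-- number of star admissible inversions -/
noncomputable def adiStarStat {n : ℕ} (π : Equiv.Perm (Fin n)) : ℕ :=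
  (((Finset.Icc 1 n) ×ˢ (Finset.Icc 1 n)).filter fun p =>
    p.1 < p.2 ∧ pval π p.2 < pval π p.1 ∧
      ((1 < p.1 ∧ pval π (p.1 - 1) < pval π p.1) ∨
        ∃ l, p.1 < l ∧ l < p.2 ∧ pval π p.1 < pval π l)).card

/-- nesting number -/
def nestStat {n : ℕ} (π : Equiv.Perm (Fin n)) : ℕ :=
  (((Finset.Icc 1 n) ×ˢ (Finset.Icc 1 n)).filter fun p =>
    p.1 < p.2 ∧ p.2 ≤ pval π p.2 ∧ pval π p.2 < pval π p.1).card +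
  (((Finset.Icc 1 n) ×ˢ (Finset.Icc 1 n)).filter fun p =>
    p.1 < p.2 ∧ pval π p.2 < pval π p.1 ∧ pval π p.1 < p.1).card

/-- `π` avoids the pattern given (in one-line notation) by the sequence `p` -/
def avoids {n k : ℕ} (π : Equiv.Perm (Fin n)) (p : Fin k → ℕ) : Prop :=
  ¬ ∃ f : Fin k ↪o Fin n, ∀ a b : Fin k, p a < p b ↔ π (f a) < π (f b)

/-- `π` has no double descent, with boundary values `b` at positions 0 and n+1 -/
def noDD {n : ℕ} (b : ℕ) (π : Equiv.Perm (Fin n)) : Prop :=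
  ∀ i, 1 ≤ i → i ≤ n →
    ¬ (pvalB b π i < pvalB b π (i - 1) ∧ pvalB b π (i + 1) < pvalB b π i)

/-- alternating (up-down): π(1) < π(2) > π(3) < π(4) > ⋯ -/
def isAlt {n : ℕ} (π : Equiv.Perm (Fin n)) : Prop :=
  ∀ i, 1 ≤ i → i + 1 ≤ n →
    (Odd i → pval π i < pval π (i + 1)) ∧ (Even i → pval π (i + 1) < pval π i)

/-- down-up: π(1) > π(2) < π(3) > π(4) < ⋯ -/
def isDownUp {n : ℕ} (π : Equiv.Perm (Fin n)) : Prop :=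
  ∀ i, 1 ≤ i → i + 1 ≤ n →
    (Odd i → pval π (i + 1) < pval π i) ∧ (Even i → pval π i < pval π (i + 1))

/-- `i` is a foremaximum of `π` -/
def isForemax {n : ℕ} (π : Equiv.Perm (Fin n)) (i : ℕ) : Prop :=
  1 ≤ i ∧ i ≤ n ∧ (∀ j, 1 ≤ j → j ≤ i → pval π j ≤ pval π i) ∧
    (i = n ∨ pval π i < pval π (i + 1))

/-- coderangement: no foremaximum -/
def isCoderangement {n : ℕ} (π : Equiv.Perm (Fin n)) : Prop :=
  ∀ i, ¬ isForemax π i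

/-- derangement: no fixed point -/
def isDerangement {n : ℕ} (π : Equiv.Perm (Fin n)) : Prop := ∀ i, π i ≠ i

/-- the order-reversing permutation of positions -/
def revPermN (n : ℕ) : Equiv.Perm (Fin n) := ⟨Fin.rev, Fin.rev, Fin.rev_rev, Fin.rev_rev⟩

/-- the reverse of `π`: πʳ(i) = π(n+1-i) -/
def reverseP {n : ℕ} (π : Equiv.Perm (Fin n)) : Equiv.Perm (Fin n) := (revPermN n).trans π


/-!
A 321-avoiding permutation increases along its excedances and along its non-excedances, so it
is determined by the pair `(E, A)` of its excedance positions and excedance values; for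
derangements these pairs are characterized by two ballot-type conditions, and the inversion
number is `∑ A - ∑ E`. Toggling the least position lying in both or in neither of `E` and `A`
preserves these conditions and the inversion number and changes `#E` by one. This
sign-reversing involution leaves only the pairs with `A = Eᶜ`, which exist only when `n = 2 #E`;
for them the sign is `(-1) ^ (n / 2)` and `E ∩ A = ∅` is the `NDE` condition.
-/

open scoped symmDiff

namespace Finset

section SymmDiff

variable {α : Type*} [DecidableEq α] {S : Finset α} {s : α}

lemma symmDiff_singleton_of_mem (h : s ∈ S) : S ∆ {s} = S.erase s := by
  ext x
  by_cases hx : x = s <;> simp [mem_symmDiff, hx, h]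

lemma symmDiff_singleton_of_notMem (h : s ∉ S) : S ∆ {s} = insert s S := by
  ext x
  by_cases hx : x = s <;> simp [mem_symmDiff, hx, h]

lemma symmDiff_singleton_symmDiff_symmDiff_singleton (E A : Finset α) (s : α) :
    (E ∆ {s}) ∆ (A ∆ {s}) = E ∆ A := by
  rw [symmDiff_symmDiff_symmDiff_comm, symmDiff_self, symmDiff_bot]

lemma neg_one_pow_card_symmDiff_singleton {R : Type*} [Ring R] (S : Finset α) (s : α) :
    (-1 : R) ^ #(S ∆ {s}) = -(-1) ^ #S := by
  by_cases hs : s ∈ S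
  · rw [symmDiff_singleton_of_mem hs, ← card_erase_add_one hs, pow_succ, mul_neg_one, neg_neg]
  · rw [symmDiff_singleton_of_notMem hs, card_insert_of_notMem hs, pow_succ, mul_neg_one]

variable [Fintype α]

lemma compl_symmDiff_singleton : (S ∆ {s})ᶜ = Sᶜ ∆ {s} := by
  ext x
  by_cases hx : x = s <;> simp [mem_symmDiff, hx]

lemma nonempty_compl_symmDiff_iff {E A : Finset α} : (E ∆ A)ᶜ.Nonempty ↔ ¬ A = Eᶜ := by
  rw [nonempty_iff_ne_empty, Ne, ← bot_eq_empty, compl_eq_bot, symmDiff_eq_top,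
    eq_compl_iff_isCompl, isCompl_comm]

lemma eq_compl_iff_of_card_eq {E A : Finset α} (hcard : #E = #A) :
    A = Eᶜ ↔ 2 * #E = Fintype.card α ∧ Disjoint E A := by
  refine ⟨fun h => ?_, fun ⟨h2, hdisj⟩ => ?_⟩
  · subst h
    have := card_compl_add_card E
    exact ⟨by omega, disjoint_compl_right⟩
  · refine eq_of_subset_of_card_le (subset_compl_iff_disjoint_left.mpr hdisj) ?_
    rw [card_compl]
    omega

end SymmDiff

section Dominates

variable {α : Type*} [LinearOrder α] {E A : Finset α} {s : α}

lemma card_filter_lt_lt_card_filter_le {S : Finset α} (hs : s ∈ S) :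
    #{x ∈ S | x < s} < #{x ∈ S | x ≤ s} :=
  card_lt_card <| (ssubset_iff_of_subset fun e => by simpa using fun he h => ⟨he, h.le⟩).mpr
    ⟨s, by simp [hs], by simp⟩

lemma card_filter_compl_add_card_filter [Fintype α] (S : Finset α) (p : α → Prop)
    [DecidablePred p] : #{x ∈ Sᶜ | p x} + #{x ∈ S | p x} = #{x | p x} := by
  rw [add_comm, ← card_union_of_disjoint (disjoint_filter_filter disjoint_compl_right),
    ← filter_union, union_compl]

/-- For `#E = #A` this says that the increasing bijection `E → A` moves every point up. -/
def Dominates (E A : Finset α) : Prop :=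
  ∀ t, #{a ∈ A | a ≤ t} ≤ #{e ∈ E | e < t}

lemma dominates_of_injOn (f : α → α) (hf : Set.InjOn f A) (hmaps : ∀ a ∈ A, f a ∈ E)
    (hlt : ∀ a ∈ A, f a < a) : Dominates E A := by
  intro t
  refine card_le_card_of_injOn f (fun a ha => ?_) (hf.mono (coe_subset.mpr (filter_subset _ _)))
  simp only [coe_filter, Set.mem_ofPred_eq] at ha ⊢
  exact ⟨hmaps a ha.1, (hlt a ha.1).trans_le ha.2⟩

lemma Dominates.lt_apply (hdom : Dominates E A) {f : α → α} (hmaps : ∀ e ∈ E, f e ∈ A)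
    (hmono : StrictMonoOn f E) {x : α} (hx : x ∈ E) : x < f x := by
  by_contra! hfx
  have hinj : #{e ∈ E | e ≤ x} ≤ #{a ∈ A | a ≤ f x} := by
    refine card_le_card_of_injOn f (fun e he => ?_)
      (hmono.injOn.mono (coe_subset.mpr (filter_subset _ _)))
    simp only [coe_filter, Set.mem_ofPred_eq] at he ⊢
    exact ⟨hmaps e he.1, hmono.monotoneOn he.1 hx he.2⟩
  have hsub : #{e ∈ E | e < f x} ≤ #{e ∈ E | e < x} :=
    card_le_card fun e => by simpa using fun he h => ⟨he, h.trans_le hfx⟩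
  have := hdom (f x)
  have := card_filter_lt_lt_card_filter_le hx
  omega

lemma Dominates.symmDiff_singleton (h : Dominates E A) (hs : s ∈ E ↔ s ∈ A)
    (hlt : #{a ∈ A | a < s} < #{e ∈ E | e < s}) : Dominates (E ∆ {s}) (A ∆ {s}) := by
  intro t
  have ht := h t
  by_cases hsA : s ∈ A
  · rw [symmDiff_singleton_of_mem (hs.mpr hsA), symmDiff_singleton_of_mem hsA, filter_erase,
      filter_erase, card_erase_eq_ite, card_erase_eq_ite]
    simp only [mem_filter, hsA, hs.mpr hsA, true_and]
    split_ifs <;> first | omega | order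
  · rw [symmDiff_singleton_of_notMem (hs.not.mpr hsA), symmDiff_singleton_of_notMem hsA,
      filter_insert, filter_insert]
    rcases lt_trichotomy s t with hst | rfl | hst
    · simp only [hst, hst.le, if_true, card_insert_eq_ite, mem_filter, hsA,
        hs.not.mpr hsA, false_and, if_false]
      omega
    · have : {a ∈ A | a ≤ s} = {a ∈ A | a < s} :=
        filter_congr fun a ha => ⟨fun h => h.lt_of_ne (ne_of_mem_of_not_mem ha hsA), le_of_lt⟩
      simp only [le_refl, lt_irrefl, if_true, if_false, card_insert_eq_ite, mem_filter, hsA,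
        false_and, this]
      omega
    · simp only [hst.not_ge, hst.not_gt, if_false]
      exact ht

end Dominates

section PairInv

variable {n : ℕ} {E A : Finset (Fin n)} {s : Fin n}

/-- The inversion number of the 321-avoiding permutation with excedances `E` and excedance
values `A`; the truncated subtraction is exact for excedance pairs. -/
def pairInv (E A : Finset (Fin n)) : ℕ := ∑ a ∈ A, (a : ℕ) - ∑ e ∈ E, (e : ℕ)

lemma pairInv_symmDiff_singleton (hs : s ∈ E ↔ s ∈ A) :
    pairInv (E ∆ {s}) (A ∆ {s}) = pairInv E A := by
  unfold pairInv
  by_cases hsA : s ∈ A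
  · rw [symmDiff_singleton_of_mem (hs.mpr hsA), symmDiff_singleton_of_mem hsA]
    have := sum_erase_add A (fun x : Fin n => (x : ℕ)) hsA
    have := sum_erase_add E (fun x : Fin n => (x : ℕ)) (hs.mpr hsA)
    omega
  · rw [symmDiff_singleton_of_notMem (hs.not.mpr hsA), symmDiff_singleton_of_notMem hsA,
      sum_insert hsA, sum_insert (hs.not.mpr hsA)]
    omega

end PairInv

end Finset

noncomputable def Fintype.orderIsoOfCardEq (β γ : Type*) [LinearOrder β] [Fintype β]
    [LinearOrder γ] [Fintype γ] (h : Fintype.card β = Fintype.card γ) : β ≃o γ :=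
  (Fintype.orderIsoFinOfCardEq β h).symm.trans (Fintype.orderIsoFinOfCardEq γ rfl)

namespace Equiv.Perm

variable {α : Type*} [LinearOrder α]

def Avoids321 (π : Perm α) : Prop :=
  ¬ ∃ i j k, i < j ∧ j < k ∧ π k < π j ∧ π j < π i

lemma avoids321_of_strictMonoOn {π : Perm α} {s : Set α} (h₁ : StrictMonoOn π s)
    (h₂ : StrictMonoOn π sᶜ) : π.Avoids321 := by
  rintro ⟨i, j, k, hij, hjk, hkj, hji⟩
  have mono : ∀ {x y}, x < y → (x ∈ s ↔ y ∈ s) → π x < π y := fun {x y} hxy hs => by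
    by_cases hx : x ∈ s
    · exact h₁ hx (hs.mp hx) hxy
    · exact h₂ hx (hs.not.mp hx) hxy
  by_cases hi : i ∈ s <;> by_cases hj : j ∈ s <;> by_cases hk : k ∈ s
  all_goals first
    | exact (mono hij (by tauto)).not_gt hji
    | exact (mono hjk (by tauto)).not_gt hkj
    | exact (mono (hij.trans hjk) (by tauto)).not_gt (hkj.trans hji)

def subtypeOrderIso (σ : Perm α) {p q : α → Prop} (h : ∀ x, p x ↔ q (σ x))
    (hσ : StrictMonoOn σ {x | p x}) : {x // p x} ≃o {x // q x} where
  toEquiv := σ.subtypeEquiv h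
  map_rel_iff' {a b} := hσ.le_iff_le a.2 b.2

lemma eq_of_strictMonoOn [WellFoundedLT α] {s t : Set α} {σ τ : Perm α}
    (hσ : ∀ x, x ∈ s ↔ σ x ∈ t) (hτ : ∀ x, x ∈ s ↔ τ x ∈ t) (hσ₁ : StrictMonoOn σ s)
    (hσ₂ : StrictMonoOn σ sᶜ) (hτ₁ : StrictMonoOn τ s) (hτ₂ : StrictMonoOn τ sᶜ) : σ = τ := by
  ext x
  by_cases hx : x ∈ s
  · have := Subsingleton.elim (σ.subtypeOrderIso hσ hσ₁) (τ.subtypeOrderIso hτ hτ₁)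
    exact congrArg (fun f => (f ⟨x, hx⟩ : α)) this
  · have := Subsingleton.elim (σ.subtypeOrderIso (q := (· ∉ t)) (fun x => (hσ x).not) hσ₂)
      (τ.subtypeOrderIso (q := (· ∉ t)) (fun x => (hτ x).not) hτ₂)
    exact congrArg (fun f => (f ⟨x, hx⟩ : α)) this

lemma strictMonoOn_symm {π : Perm α} {s t : Set α} (hst : ∀ x, x ∈ s ↔ π x ∈ t)
    (hπ : StrictMonoOn π s) : StrictMonoOn π.symm t := by
  intro a ha b hb hab
  refine (hπ.lt_iff_lt ((hst _).mpr ?_) ((hst _).mpr ?_)).mp ?_ <;> simpa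

variable [Fintype α]

section ExcedancePairs

variable {E A : Finset α} {s : α}

/-- The pairs of excedance positions and excedance values of derangements. -/
def IsExcedancePair (E A : Finset α) : Prop :=
  #E = #A ∧ Dominates E A ∧ Dominates Aᶜ Eᶜ

lemma IsExcedancePair.symmDiff_singleton (hEA : IsExcedancePair E A) (hs : s ∈ E ↔ s ∈ A) :
    IsExcedancePair (E ∆ {s}) (A ∆ {s}) := by
  obtain ⟨hcard, hdom, hdomc⟩ := hEA
  have hE := card_filter_compl_add_card_filter E (· < s)
  have hA := card_filter_compl_add_card_filter A (· < s)
  have hlt : #{a ∈ A | a < s} < #{e ∈ E | e < s} := by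
    by_cases hsA : s ∈ A
    · exact (card_filter_lt_lt_card_filter_le hsA).trans_le (hdom s)
    · have := (card_filter_lt_lt_card_filter_le (S := Eᶜ) (by simpa [hs] using hsA)).trans_le
        (hdomc s)
      omega
  refine ⟨?_, hdom.symmDiff_singleton hs hlt, ?_⟩
  · by_cases hsA : s ∈ A
    · rw [symmDiff_singleton_of_mem (hs.mpr hsA), symmDiff_singleton_of_mem hsA,
        card_erase_of_mem (hs.mpr hsA), card_erase_of_mem hsA, hcard]
    · rw [symmDiff_singleton_of_notMem (hs.not.mpr hsA), symmDiff_singleton_of_notMem hsA,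
        card_insert_of_notMem (hs.not.mpr hsA), card_insert_of_notMem hsA, hcard]
  · rw [compl_symmDiff_singleton, compl_symmDiff_singleton]
    exact hdomc.symmDiff_singleton (by simp [hs]) (by omega)

lemma IsExcedancePair.two_mul_card_eq (hEA : IsExcedancePair E A) (hA : A = Eᶜ) :
    2 * #E = Fintype.card α :=
  ((eq_compl_iff_of_card_eq hEA.1).mp hA).1

/-- The positions lying in both or in neither of `E` and `A` form `(E ∆ A)ᶜ`, which toggling
one of them leaves unchanged; toggling the least one is thus an involution. -/
theorem sum_isExcedancePair_eq_sum_compl {M : Type*} [AddCommGroup M]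
    (φ : Finset α → Finset α → M)
    (hφ : ∀ E A s, (s ∈ E ↔ s ∈ A) → φ (E ∆ {s}) (A ∆ {s}) = -φ E A) :
    ∑ EA ∈ {EA : Finset α × Finset α | IsExcedancePair EA.1 EA.2}, φ EA.1 EA.2 =
      ∑ EA ∈ {EA : Finset α × Finset α | IsExcedancePair EA.1 EA.2 ∧ EA.2 = EA.1ᶜ},
        φ EA.1 EA.2 := by
  rw [← sum_filter_add_sum_filter_not _ (fun EA => EA.2 = EA.1ᶜ), filter_filter, add_eq_left]
  have hne : ∀ EA ∈ ({EA ∈ {EA : Finset α × Finset α | IsExcedancePair EA.1 EA.2} |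
      ¬EA.2 = EA.1ᶜ} : Finset (Finset α × Finset α)), (EA.1 ∆ EA.2)ᶜ.Nonempty :=
    fun EA hEA => nonempty_compl_symmDiff_iff.mpr (mem_filter.mp hEA).2
  have hmem : ∀ {E A : Finset α} {s : α}, s ∈ (E ∆ A)ᶜ → (s ∈ E ↔ s ∈ A) := fun hs => by
    simpa [mem_symmDiff, not_or, iff_iff_implies_and_implies, and_comm] using hs
  refine sum_involution (fun EA hEA => (EA.1 ∆ {(EA.1 ∆ EA.2)ᶜ.min' (hne EA hEA)},
      EA.2 ∆ {(EA.1 ∆ EA.2)ᶜ.min' (hne EA hEA)}))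
    (fun EA hEA => ?_) (fun EA hEA _ => ?_) (fun EA hEA => ?_) (fun EA hEA => ?_)
  · rw [hφ _ _ _ (hmem (min'_mem _ _)), add_neg_cancel]
  · simp [Prod.ext_iff, symmDiff_eq_left]
  · simp only [mem_filter, mem_univ, true_and] at hEA ⊢
    refine ⟨hEA.1.symmDiff_singleton (hmem (min'_mem _ _)), ?_⟩
    rw [← nonempty_compl_symmDiff_iff, symmDiff_singleton_symmDiff_symmDiff_singleton,
      nonempty_compl_symmDiff_iff]
    exact hEA.2
  · simp only [symmDiff_singleton_symmDiff_symmDiff_singleton, symmDiff_symmDiff_cancel_right]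

end ExcedancePairs

def excedances (π : Perm α) : Finset α := {i | i < π i}

def excedanceValues (π : Perm α) : Finset α := π.excedances.map π.toEmbedding

variable {π : Perm α}

@[simp]
lemma mem_excedances {i : α} : i ∈ π.excedances ↔ i < π i := by
  simp [excedances]

@[simp]
lemma mem_excedanceValues {a : α} : a ∈ π.excedanceValues ↔ π.symm a < a := by
  simp [excedanceValues, mem_map_equiv]

lemma card_excedanceValues (π : Perm α) : #π.excedanceValues = #π.excedances :=
  card_map _

lemma apply_lt_of_notMem_excedances (hπ : π ∈ derangements α) {i : α}
    (hi : i ∉ π.excedances) : π i < i :=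
  lt_of_le_of_ne (not_lt.mp (mem_excedances.not.mp hi)) (hπ i)

lemma isExcedancePair_excedances (hπ : π ∈ derangements α) :
    IsExcedancePair π.excedances π.excedanceValues := by
  refine ⟨(card_excedanceValues π).symm, ?_, ?_⟩
  · refine dominates_of_injOn π.symm π.symm.injective.injOn (fun a ha => ?_) fun a ha => ?_
    · simpa using mem_excedanceValues.mp ha
    · exact mem_excedanceValues.mp ha
  · refine dominates_of_injOn π π.injective.injOn (fun x hx => ?_) fun x hx => ?_
    · simpa using (mem_excedances.not.mp (mem_compl.mp hx))
    · exact apply_lt_of_notMem_excedances hπ (mem_compl.mp hx)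

lemma exists_lt_apply_lt (π : Perm α) {i j : α} (hij : i < j) (hj : j ≤ π j)
    (hji : π j < π i) : ∃ k, j < k ∧ π k < π j := by
  by_contra! h
  have hmaps : Set.MapsTo π (insert i ({x | j ≤ x} : Finset α) : Finset α)
      ({x | j ≤ x} : Finset α) := by
    intro x hx
    simp only [coe_insert, coe_filter, mem_univ, true_and, Set.mem_insert_iff,
      Set.mem_ofPred_eq] at hx ⊢
    rcases hx with rfl | hx
    · exact hj.trans hji.le
    · rcases hx.eq_or_lt with rfl | hx
      · exact hj
      · exact hj.trans (h x hx)
  have := card_le_card_of_injOn π hmaps π.injective.injOn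
  rw [card_insert_of_notMem (by simpa using hij)] at this
  omega

lemma exists_apply_lt_lt (π : Perm α) {i j : α} (hij : i < j) (hi : π i ≤ i)
    (hji : π j < π i) : ∃ k, k < i ∧ π i < π k := by
  by_contra! h
  have hmaps : Set.MapsTo π (insert j ({x | x ≤ i} : Finset α) : Finset α)
      ({x | x ≤ i} : Finset α) := by
    intro x hx
    simp only [coe_insert, coe_filter, mem_univ, true_and, Set.mem_insert_iff,
      Set.mem_ofPred_eq] at hx ⊢
    rcases hx with rfl | hx
    · exact hji.le.trans hi
    · rcases hx.eq_or_lt with rfl | hx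
      · exact hi
      · exact (h x hx).trans hi
  have := card_le_card_of_injOn π hmaps π.injective.injOn
  rw [card_insert_of_notMem (by simpa using hij)] at this
  omega

lemma Avoids321.strictMonoOn_excedances (hπ : π.Avoids321) :
    StrictMonoOn π π.excedances := by
  intro i hi j hj hij
  by_contra! hle
  have hji : π j < π i := hle.lt_of_ne (π.injective.ne hij.ne')
  obtain ⟨k, hjk, hk⟩ := π.exists_lt_apply_lt hij (le_of_lt (mem_excedances.mp hj)) hji
  exact hπ ⟨i, j, k, hij, hjk, hk, hji⟩

lemma Avoids321.strictMonoOn_compl_excedances (hπ : π.Avoids321) :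
    StrictMonoOn π (π.excedances : Set α)ᶜ := by
  intro i hi j hj hij
  by_contra! hle
  have hji : π j < π i := hle.lt_of_ne (π.injective.ne hij.ne')
  obtain ⟨k, hki, hk⟩ :=
    π.exists_apply_lt_lt hij (not_lt.mp (mem_excedances.not.mp hi)) hji
  exact hπ ⟨k, i, j, hki, hij, hji, hk⟩

section OfExcedancePair

variable {E A : Finset α}

noncomputable def ofExcedancePair (E A : Finset α) (h : #E = #A) : Perm α :=
  Equiv.subtypeCongr
    (Fintype.orderIsoOfCardEq {x // x ∈ E} {x // x ∈ A} (by simpa using h)).toEquiv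
    (Fintype.orderIsoOfCardEq {x // x ∉ E} {x // x ∉ A}
      (by simp [Fintype.card_subtype_compl, h])).toEquiv

lemma ofExcedancePair_apply_of_mem (h : #E = #A) {x : α} (hx : x ∈ E) :
    ofExcedancePair E A h x =
      Fintype.orderIsoOfCardEq {x // x ∈ E} {x // x ∈ A} (by simpa using h) ⟨x, hx⟩ := by
  simp [ofExcedancePair, Equiv.subtypeCongr, Equiv.sumCompl_symm_apply_of_pos hx]

lemma ofExcedancePair_apply_of_notMem (h : #E = #A) {x : α} (hx : x ∉ E) :
    ofExcedancePair E A h x =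
      Fintype.orderIsoOfCardEq {x // x ∉ E} {x // x ∉ A}
        (by simp [Fintype.card_subtype_compl, h]) ⟨x, hx⟩ := by
  simp [ofExcedancePair, Equiv.subtypeCongr, Equiv.sumCompl_symm_apply_of_neg hx]

lemma mem_iff_ofExcedancePair_mem (h : #E = #A) (x : α) :
    x ∈ E ↔ ofExcedancePair E A h x ∈ A := by
  by_cases hx : x ∈ E
  · simp [hx, ofExcedancePair_apply_of_mem h hx]
  · simpa [hx, ofExcedancePair_apply_of_notMem h hx] using
      (Fintype.orderIsoOfCardEq {x // x ∉ E} {x // x ∉ A}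
        (by simp [Fintype.card_subtype_compl, h]) ⟨x, hx⟩).2

lemma strictMonoOn_ofExcedancePair (h : #E = #A) : StrictMonoOn (ofExcedancePair E A h) E := by
  intro x hx y hy hxy
  rw [ofExcedancePair_apply_of_mem h hx, ofExcedancePair_apply_of_mem h hy]
  exact Subtype.coe_lt_coe.mpr ((OrderIso.lt_iff_lt _).mpr (Subtype.mk_lt_mk.mpr hxy))

lemma strictMonoOn_compl_ofExcedancePair (h : #E = #A) :
    StrictMonoOn (ofExcedancePair E A h) (E : Set α)ᶜ := by
  intro x hx y hy hxy
  rw [ofExcedancePair_apply_of_notMem h hx, ofExcedancePair_apply_of_notMem h hy]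
  exact Subtype.coe_lt_coe.mpr ((OrderIso.lt_iff_lt _).mpr (Subtype.mk_lt_mk.mpr hxy))

lemma ofExcedancePair_excedances (hav : π.Avoids321) :
    ofExcedancePair π.excedances π.excedanceValues (card_excedanceValues π).symm = π :=
  eq_of_strictMonoOn (s := π.excedances) (t := π.excedanceValues)
    (mem_iff_ofExcedancePair_mem _) (by simp) (strictMonoOn_ofExcedancePair _)
    (strictMonoOn_compl_ofExcedancePair _) hav.strictMonoOn_excedances
    hav.strictMonoOn_compl_excedances

variable (hEA : IsExcedancePair E A)
include hEA

lemma IsExcedancePair.lt_ofExcedancePair {x : α} (hx : x ∈ E) :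
    x < ofExcedancePair E A hEA.1 x :=
  hEA.2.1.lt_apply (fun e he => (mem_iff_ofExcedancePair_mem _ e).mp he)
    (strictMonoOn_ofExcedancePair _) hx

lemma IsExcedancePair.ofExcedancePair_lt {x : α} (hx : x ∉ E) :
    ofExcedancePair E A hEA.1 x < x := by
  have hcompl : ∀ y, y ∈ (E : Set α)ᶜ ↔ ofExcedancePair E A hEA.1 y ∈ (A : Set α)ᶜ :=
    fun y => (mem_iff_ofExcedancePair_mem hEA.1 y).not
  have hmono := strictMonoOn_symm hcompl (strictMonoOn_compl_ofExcedancePair hEA.1)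
  have hlt := hEA.2.2.lt_apply
    (fun a ha => by
      simpa using (hcompl ((ofExcedancePair E A hEA.1).symm a)).mpr (by simpa using ha))
    (by simpa using hmono) (x := ofExcedancePair E A hEA.1 x) (by simpa using (hcompl x).mp hx)
  simpa using hlt

lemma IsExcedancePair.excedances_ofExcedancePair :
    (ofExcedancePair E A hEA.1).excedances = E := by
  ext x
  rw [mem_excedances]
  refine ⟨fun hlt => ?_, hEA.lt_ofExcedancePair⟩
  by_contra hx
  exact (hEA.ofExcedancePair_lt hx).not_gt hlt

lemma IsExcedancePair.excedanceValues_ofExcedancePair :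
    (ofExcedancePair E A hEA.1).excedanceValues = A := by
  ext a
  rw [excedanceValues, hEA.excedances_ofExcedancePair, mem_map_equiv,
    mem_iff_ofExcedancePair_mem hEA.1, apply_symm_apply]

lemma IsExcedancePair.ofExcedancePair_mem_derangements :
    ofExcedancePair E A hEA.1 ∈ derangements α := by
  intro x hx
  by_cases hxE : x ∈ E
  · exact (hEA.lt_ofExcedancePair hxE).ne' hx
  · exact (hEA.ofExcedancePair_lt hxE).ne hx

lemma IsExcedancePair.avoids321_ofExcedancePair : (ofExcedancePair E A hEA.1).Avoids321 :=
  avoids321_of_strictMonoOn (strictMonoOn_ofExcedancePair _)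
    (strictMonoOn_compl_ofExcedancePair _)

end OfExcedancePair

theorem sum_derangements_avoids321 {M : Type*} [AddCommMonoid M]
    (P : Finset α → Finset α → Prop) [∀ E A, Decidable (P E A)]
    (g : Finset α → Finset α → M) :
    ∑ π ∈ {π : Perm α | π ∈ derangements α ∧ π.Avoids321 ∧ P π.excedances π.excedanceValues},
        g π.excedances π.excedanceValues =
      ∑ EA ∈ {EA : Finset α × Finset α | IsExcedancePair EA.1 EA.2 ∧ P EA.1 EA.2}, g EA.1 EA.2 := by
  refine sum_bij' (fun π _ => (π.excedances, π.excedanceValues))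
    (fun EA hEA => ofExcedancePair EA.1 EA.2 (mem_filter.mp hEA).2.1.1) ?_ ?_ ?_ ?_ ?_
  · simp only [mem_filter, mem_univ, true_and]
    exact fun π ⟨hπ, _, hP⟩ => ⟨isExcedancePair_excedances hπ, hP⟩
  · simp only [mem_filter, mem_univ, true_and]
    intro EA ⟨hEA, hP⟩
    refine ⟨hEA.ofExcedancePair_mem_derangements, hEA.avoids321_ofExcedancePair, ?_⟩
    rwa [hEA.excedances_ofExcedancePair, hEA.excedanceValues_ofExcedancePair]
  · simp only [mem_filter, mem_univ, true_and]
    exact fun π ⟨_, hav, _⟩ => ofExcedancePair_excedances hav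
  · simp only [mem_filter, mem_univ, true_and]
    exact fun EA ⟨hEA, _⟩ =>
      Prod.ext hEA.excedances_ofExcedancePair hEA.excedanceValues_ofExcedancePair
  · exact fun _ _ => rfl

section Inversions

variable {n : ℕ} {π : Perm (Fin n)}

lemma Avoids321.card_inversions_add_of_lt (hπ : π.Avoids321) {i : Fin n} (hi : i < π i) :
    #{j | i < j ∧ π j < π i} + i = π i := by
  have hsplit : ({j | π j < π i} : Finset (Fin n)) =
      Iio i ∪ ({j | i < j ∧ π j < π i} : Finset (Fin n)) := by
    ext j
    simp only [mem_filter, mem_univ, true_and, mem_union, mem_Iio]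
    refine ⟨fun hj => ?_, ?_⟩
    · rcases lt_trichotomy j i with hji | rfl | hij
      · exact Or.inl hji
      · exact absurd hj (lt_irrefl _)
      · exact Or.inr ⟨hij, hj⟩
    · rintro (hji | ⟨_, hj⟩)
      · by_cases hj : j < π j
        · exact hπ.strictMonoOn_excedances (mem_excedances.mpr hj) (mem_excedances.mpr hi) hji
        · exact (not_lt.mp hj).trans_lt (hji.trans hi)
      · exact hj
  have hcard : #({j | π j < π i} : Finset (Fin n)) = π i := by
    have : ({j | π j < π i} : Finset (Fin n)) = (Iio (π i)).map π.symm.toEmbedding := by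
      ext j
      simp [mem_map_equiv]
    rw [this, card_map, Fin.card_Iio]
  rw [← hcard, hsplit, card_union_of_disjoint, Fin.card_Iio, add_comm]
  exact disjoint_left.mpr fun j hj hj' => by simp at hj hj'; exact hj.not_gt hj'.1

lemma Avoids321.card_inversions_of_le (hπ : π.Avoids321) {i : Fin n} (hi : π i ≤ i) :
    #{j | i < j ∧ π j < π i} = 0 := by
  refine card_eq_zero.mpr (filter_eq_empty_iff.mpr fun j _ ⟨hij, hji⟩ => ?_)
  have hj : j ∈ ((π.excedances : Set (Fin n))ᶜ) := by
    simpa using (hji.trans_le hi).le.trans hij.le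
  exact hji.not_gt (hπ.strictMonoOn_compl_excedances (by simpa using hi) hj hij)

lemma Avoids321.card_inversions_add_sum_excedances (hπ : π.Avoids321) :
    #{p : Fin n × Fin n | p.1 < p.2 ∧ π p.2 < π p.1} + ∑ e ∈ π.excedances, (e : ℕ) =
      ∑ a ∈ π.excedanceValues, (a : ℕ) := by
  have hfib : #{p : Fin n × Fin n | p.1 < p.2 ∧ π p.2 < π p.1} =
      ∑ i ∈ π.excedances, #{j | i < j ∧ π j < π i} := by
    rw [card_filter, Fintype.sum_prod_type, ← sum_filter_add_sum_filter_not univ (fun i => i < π i)]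
    simp only [← card_filter]
    rw [add_eq_left.mpr (sum_eq_zero fun i hi => hπ.card_inversions_of_le (by simpa using hi))]
    rfl
  rw [hfib, ← sum_add_distrib, excedanceValues, sum_map]
  exact sum_congr rfl fun i hi => hπ.card_inversions_add_of_lt (mem_excedances.mp hi)

end Inversions

end Equiv.Perm

open Equiv.Perm

lemma Icc_one_eq_map_univ (n : ℕ) :
    Icc 1 n = (univ : Finset (Fin n)).map (Fin.valEmbedding.trans (addRightEmbedding 1)) := by
  ext i
  simp only [mem_Icc, mem_map, mem_univ, true_and, Function.Embedding.trans_apply,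
    Fin.valEmbedding_apply, addRightEmbedding_apply]
  exact ⟨fun h => ⟨⟨i - 1, by omega⟩, Nat.sub_add_cancel h.1⟩, by rintro ⟨j, rfl⟩; omega⟩

section Statistics

variable {n : ℕ} (π : Equiv.Perm (Fin n))

lemma pval_val_add_one (j : Fin n) : pval π (j + 1) = π j + 1 := by
  simp [pval, pvalB]

lemma excStat_eq_card_excedances : excStat π = #π.excedances := by
  rw [excStat, Icc_one_eq_map_univ, filter_map, card_map, excedances]
  congr 1
  exact filter_congr fun j _ => by simp [pval_val_add_one]

lemma invStat_eq_card_inversions :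
    invStat π = #{p : Fin n × Fin n | p.1 < p.2 ∧ π p.2 < π p.1} := by
  rw [invStat, Icc_one_eq_map_univ, ← prodMap_map_product, univ_product_univ, filter_map,
    card_map]
  congr 1
  exact filter_congr fun p _ => by simp [pval_val_add_one]

lemma forall_not_symm_lt_and_lt_iff_disjoint :
    (∀ i, 1 ≤ i → i ≤ n → ¬ (pval π.symm i < i ∧ i < pval π i)) ↔
      Disjoint π.excedances π.excedanceValues := by
  rw [disjoint_left]
  refine ⟨fun h j hE hA => h (j + 1) (by omega) j.2 ?_, fun h i h1 h2 hi => ?_⟩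
  · simp only [pval_val_add_one]
    simp only [mem_excedances, mem_excedanceValues, Fin.lt_def] at hE hA
    omega
  · obtain ⟨j, rfl⟩ : ∃ j : Fin n, i = j + 1 := ⟨⟨i - 1, by omega⟩, (Nat.sub_add_cancel h1).symm⟩
    simp only [pval_val_add_one] at hi
    exact h (a := j) (by rw [mem_excedances, Fin.lt_def]; omega)
      (by rw [mem_excedanceValues, Fin.lt_def]; omega)

lemma avoids_321_iff : avoids π ![3, 2, 1] ↔ π.Avoids321 := by
  refine not_congr ⟨fun ⟨f, hf⟩ => ?_, fun ⟨i, j, k, hij, hjk, hkj, hji⟩ => ?_⟩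
  · exact ⟨f 0, f 1, f 2, f.strictMono (by decide), f.strictMono (by decide),
      (hf 2 1).mp (by decide), (hf 1 0).mp (by decide)⟩
  · have hmono : StrictMono ![i, j, k] :=
      Fin.strictMono_iff_lt_succ.mpr fun a => by fin_cases a <;> simpa
    have hki := hkj.trans hji
    refine ⟨OrderEmbedding.ofStrictMono _ hmono, fun a b => ?_⟩
    fin_cases a <;> fin_cases b <;> simp [hkj, hji, hki, hkj.asymm, hji.asymm, hki.asymm]

variable {π} in
lemma Equiv.Perm.Avoids321.invStat_eq_pairInv (hπ : π.Avoids321) :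
    invStat π = pairInv π.excedances π.excedanceValues := by
  rw [pairInv, invStat_eq_card_inversions, ← hπ.card_inversions_add_sum_excedances]
  omega

end Statistics
open Polynomial

lemma sum_sign_mul_X_pow_invStat_eq (n : ℕ) :
    ∑ π ∈ univ.filter (fun π : Equiv.Perm (Fin n) => isDerangement π ∧ avoids π ![3,2,1]),
        (-1 : ℤ[X]) ^ excStat π * X ^ invStat π =
      ∑ EA ∈ {EA : Finset (Fin n) × Finset (Fin n) | IsExcedancePair EA.1 EA.2 ∧ EA.2 = EA.1ᶜ},
        (-1 : ℤ[X]) ^ #EA.1 * X ^ pairInv EA.1 EA.2 := by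
  set φ : Finset (Fin n) → Finset (Fin n) → ℤ[X] := fun E A => (-1) ^ #E * X ^ pairInv E A
  have hφ : ∀ E A s, (s ∈ E ↔ s ∈ A) → φ (E ∆ {s}) (A ∆ {s}) = -φ E A := fun E A s hs => by
    simp only [φ, neg_one_pow_card_symmDiff_singleton, pairInv_symmDiff_singleton hs, neg_mul]
  have h := sum_derangements_avoids321 (fun _ _ => True) φ
  simp only [and_true] at h
  refine Eq.trans ?_ (h.trans (sum_isExcedancePair_eq_sum_compl φ hφ))
  refine sum_congr (by ext π; simp only [mem_filter, mem_univ, true_and, avoids_321_iff]; rfl)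
    fun π hπ => ?_
  rw [excStat_eq_card_excedances, (mem_filter.mp hπ).2.2.invStat_eq_pairInv]

lemma sum_X_pow_invStat_eq (m : ℕ) :
    ∑ π ∈ univ.filter (fun π : Equiv.Perm (Fin (2 * m)) =>
        isDerangement π ∧ avoids π ![3,2,1] ∧ excStat π = m ∧
          ∀ i, 1 ≤ i → i ≤ 2 * m → ¬ (pval π.symm i < i ∧ i < pval π i)),
        (X : ℤ[X]) ^ invStat π =
      ∑ EA ∈ {EA : Finset (Fin (2 * m)) × Finset (Fin (2 * m)) |
          IsExcedancePair EA.1 EA.2 ∧ EA.2 = EA.1ᶜ},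
        (X : ℤ[X]) ^ pairInv EA.1 EA.2 := by
  refine Eq.trans ?_ (sum_derangements_avoids321 (fun E A => A = Eᶜ)
    (fun E A => (X : ℤ[X]) ^ pairInv E A))
  refine sum_congr ?_ fun π hπ => by rw [(mem_filter.mp hπ).2.2.1.invStat_eq_pairInv]
  ext π
  simp only [mem_filter, mem_univ, true_and, avoids_321_iff, excStat_eq_card_excedances,
    forall_not_symm_lt_and_lt_iff_disjoint, eq_compl_iff_of_card_eq (card_excedanceValues π).symm,
    Fintype.card_fin, mul_right_inj' two_ne_zero]
  rfl

/-- the (−1)-phenomenon for (exc, inv) on 321-avoiding derangements. -/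
theorem stmt5 :
    (∀ n : ℕ, Odd n →
      (∑ π ∈ Finset.univ.filter
          (fun π : Equiv.Perm (Fin n) => isDerangement π ∧ avoids π ![3,2,1]),
        (-1 : Polynomial ℤ) ^ excStat π * Polynomial.X ^ invStat π) = 0) ∧
    (∀ m : ℕ,
      (∑ π ∈ Finset.univ.filter
          (fun π : Equiv.Perm (Fin (2 * m)) => isDerangement π ∧ avoids π ![3,2,1]),
        (-1 : Polynomial ℤ) ^ excStat π * Polynomial.X ^ invStat π)
      = (-1 : Polynomial ℤ) ^ m *
        ∑ π ∈ Finset.univ.filter (fun π : Equiv.Perm (Fin (2 * m)) =>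
            isDerangement π ∧ avoids π ![3,2,1] ∧ excStat π = m ∧
              ∀ i, 1 ≤ i → i ≤ 2 * m → ¬ (pval π.symm i < i ∧ i < pval π i)),
          Polynomial.X ^ invStat π) := by
  refine ⟨fun n hn => ?_, fun m => ?_⟩
  · rw [sum_sign_mul_X_pow_invStat_eq]
    refine sum_eq_zero fun EA hEA => absurd ?_ (Nat.not_even_iff_odd.mpr hn)
    obtain ⟨hEA, hcompl⟩ := (mem_filter.mp hEA).2
    have := hEA.two_mul_card_eq hcompl
    rw [Fintype.card_fin] at this
    exact ⟨#EA.1, by omega⟩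
  · rw [sum_sign_mul_X_pow_invStat_eq, sum_X_pow_invStat_eq, mul_sum]
    refine sum_congr rfl fun EA hEA => ?_
    obtain ⟨hEA, hcompl⟩ := (mem_filter.mp hEA).2
    have := hEA.two_mul_card_eq hcompl
    rw [Fintype.card_fin] at this
    rw [show #EA.1 = m by omega]
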